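/- Let E be an effect algebra and ∼ an effect algebra congruence on E. Then the quotient E/∼ with the induced partial operation is an effect algebra, and the quotient map a ↦ [a] is a full surjective morphism of effect algebras. -/

import Mathlib

/-- An effect algebra: a partial algebra `(α; ⊕, 0, 1)`.  The partial operation is
encoded by a total function `add` together with a definedness predicate `D`. -/
structure EffectAlgebra (α : Type*) where
  D : α → α → Prop
  add : α → α → α
  zero : α
  one : α
  comm_def : ∀ a b, D a b → D b a
  comm : ∀ a b, D a b → add a b = add b a
  assoc_def₁ : ∀ a b c, D a b → D (add a b) c → D b c
  assoc_def₂ : ∀ a b c, D a b → D (add a b) c → D a (add b c)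
  assoc : ∀ a b c, D a b → D (add a b) c → add (add a b) c = add a (add b c)
  orth_exists : ∀ a, ∃! b, D a b ∧ add a b = one
  add_one : ∀ a, D a one → a = zero

namespace EffectAlgebra

variable {α : Type*}
open Classical

/-- The induced order: `a ≤ b` iff `∃ c, a ⊕ c = b`. -/
def le (E : EffectAlgebra α) (a b : α) : Prop := ∃ c, E.D a c ∧ E.add a c = b

/-- The orthosupplement `a'`. -/
noncomputable def orth (E : EffectAlgebra α) (a : α) : α := (E.orth_exists a).choose

/-- Partial difference: `sub b a = b ⊖ a`, intended for `a ≤ b`. -/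
noncomputable def sub (E : EffectAlgebra α) (b a : α) : α :=
  if h : ∃ c, E.D a c ∧ E.add a c = b then h.choose else E.zero

end EffectAlgebra

/-
The operation on classes is defined through representatives: `[a] ⊕ [b]` is defined when some
representatives are orthogonal, and (C2) makes the sum independent of their choice, so the quotient
map is a morphism and fullness holds by construction. (C5) splits a representative of a sum into
orthogonal representatives of the summands, which carries associativity over. If `a ⊕ b ∼ 1`, then
`(a ⊕ b)' ∼ 0` by (C6), and `b ⊕ (a ⊕ b)' = a'` gives `b ∼ a'` by (C2); similarly, `a ⊕ b` defined
with `b ∼ 1` forces `a ∼ 0`, since by (C5) the element `0` splits only into zeros.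
-/

namespace EffectAlgebra

variable {α : Type*} (E : EffectAlgebra α)

lemma D_orth (a : α) : E.D a (E.orth a) :=
  (E.orth_exists a).choose_spec.1.1

lemma add_orth (a : α) : E.add a (E.orth a) = E.one :=
  (E.orth_exists a).choose_spec.1.2

variable {E}

lemma eq_orth_of_add_eq_one {a b : α} (h : E.D a b) (h1 : E.add a b = E.one) :
    b = E.orth a :=
  (E.orth_exists a).choose_spec.2 b ⟨h, h1⟩

lemma D_orth_add {a b : α} (h : E.D a b) : E.D b (E.orth (E.add a b)) :=
  E.assoc_def₁ _ _ _ h (E.D_orth _)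

lemma add_orth_add {a b : α} (h : E.D a b) :
    E.add b (E.orth (E.add a b)) = E.orth a := by
  refine eq_orth_of_add_eq_one (E.assoc_def₂ _ _ _ h (E.D_orth _)) ?_
  rw [← E.assoc _ _ _ h (E.D_orth _), E.add_orth]

variable (E)

lemma orth_one : E.orth E.one = E.zero :=
  E.add_one _ (E.comm_def _ _ (E.D_orth E.one))

lemma D_zero (a : α) : E.D a E.zero := by
  have h := E.comm_def _ _ (E.D_orth a)
  refine E.assoc_def₁ _ _ _ h ?_
  rw [← E.comm _ _ (E.D_orth a), E.add_orth, ← E.orth_one]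
  exact E.D_orth _

lemma add_zero (a : α) : E.add a E.zero = a := by
  have h := E.comm_def _ _ (E.D_orth a)
  have h1 : E.add (E.orth a) a = E.one := by rw [← E.comm _ _ (E.D_orth a), E.add_orth]
  have h10 : E.D (E.add (E.orth a) a) E.zero := by
    rw [h1, ← E.orth_one]; exact E.D_orth _
  -- both `a` and `a ⊕ 0` are the orthosupplement of `a'`
  have hsum : E.add (E.orth a) (E.add a E.zero) = E.one := by
    rw [← E.assoc _ _ _ h h10, h1, ← E.orth_one, E.add_orth]
  rw [eq_orth_of_add_eq_one (E.assoc_def₂ _ _ _ h h10) hsum, ← eq_orth_of_add_eq_one h h1]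

variable {E}

lemma eq_zero_of_add_eq_zero {a b : α} (h : E.D a b) (h0 : E.add a b = E.zero) :
    a = E.zero := by
  have hb : b = E.zero := by
    refine E.add_one _ (E.assoc_def₁ _ _ _ h ?_)
    rw [h0]; exact E.comm_def _ _ (E.D_zero _)
  rw [← h0, hb, E.add_zero]

/-- An effect algebra congruence: an equivalence relation satisfying (C2), (C5) and (C6). -/
structure IsCongruence (E : EffectAlgebra α) (r : α → α → Prop) : Prop where
  equiv : Equivalence r
  add_compat : ∀ a₁ a₂ b₁ b₂ : α, r a₁ a₂ → r b₁ b₂ → E.D a₁ b₁ → E.D a₂ b₂ →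
    r (E.add a₁ b₁) (E.add a₂ b₂)
  exists_split : ∀ a b c : α, E.D b c → r a (E.add b c) →
    ∃ b₁ c₁ : α, r b₁ b ∧ r c₁ c ∧ E.D b₁ c₁ ∧ a = E.add b₁ c₁
  orth_compat : ∀ a b : α, r a b → r (E.orth a) (E.orth b)

namespace IsCongruence

variable {r : α → α → Prop} (hc : E.IsCongruence r)

abbrev setoid : Setoid α := ⟨r, hc.equiv⟩

def quotD (x y : Quotient hc.setoid) : Prop :=
  ∃ a b : α, ⟦a⟧ = x ∧ ⟦b⟧ = y ∧ E.D a b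

open Classical in
noncomputable def quotAdd (x y : Quotient hc.setoid) : Quotient hc.setoid :=
  if h : hc.quotD x y then ⟦E.add h.choose h.choose_spec.choose⟧ else ⟦E.zero⟧

include hc

lemma rel_zero_of_add_rel_zero {a b : α} (h : E.D a b) (h0 : r (E.add a b) E.zero) :
    r a E.zero := by
  obtain ⟨a₁, b₁, ha, -, h₁, hz⟩ := hc.exists_split _ a b h (hc.equiv.symm h0)
  rw [eq_zero_of_add_eq_zero h₁ hz.symm] at ha
  exact hc.equiv.symm ha

lemma orth_rel_zero_of_rel_one {a : α} (h : r a E.one) : r (E.orth a) E.zero := by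
  simpa only [E.orth_one] using hc.orth_compat _ _ h

lemma rel_orth_of_add_rel_one {a b : α} (h : E.D a b) (h1 : r (E.add a b) E.one) :
    r b (E.orth a) := by
  have h0 := hc.orth_rel_zero_of_rel_one h1
  have := hc.add_compat _ _ _ _ (hc.equiv.refl b) h0 (D_orth_add h) (E.D_zero b)
  rw [add_orth_add h, E.add_zero] at this
  exact hc.equiv.symm this

lemma rel_zero_of_D_of_rel_one {a b : α} (h : E.D a b) (h1 : r b E.one) : r a E.zero := by
  have h' := E.comm_def _ _ h
  refine hc.rel_zero_of_add_rel_zero (D_orth_add h') ?_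
  rw [add_orth_add h']
  exact hc.orth_rel_zero_of_rel_one h1

lemma quotD_mk_iff {a b : α} :
    hc.quotD ⟦a⟧ ⟦b⟧ ↔ ∃ a₁ b₁ : α, r a₁ a ∧ r b₁ b ∧ E.D a₁ b₁ := by
  simp only [quotD, Quotient.eq]
  rfl

lemma quotAdd_mk {a b : α} (h : E.D a b) : hc.quotAdd ⟦a⟧ ⟦b⟧ = ⟦E.add a b⟧ := by
  have hD : hc.quotD ⟦a⟧ ⟦b⟧ := ⟨a, b, rfl, rfl, h⟩
  obtain ⟨ha, hb, h'⟩ := hD.choose_spec.choose_spec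
  rw [quotAdd, dif_pos hD]
  exact Quotient.sound (hc.add_compat _ _ _ _ (Quotient.exact ha) (Quotient.exact hb) h' h)

lemma exists_rep_of_quotD_quotAdd {a b : α} {z : Quotient hc.setoid} (h : E.D a b)
    (hz : hc.quotD (hc.quotAdd ⟦a⟧ ⟦b⟧) z) :
    ∃ a₁ b₁ c : α, ⟦a₁⟧ = (⟦a⟧ : Quotient hc.setoid) ∧ ⟦b₁⟧ = (⟦b⟧ : Quotient hc.setoid) ∧
      ⟦c⟧ = z ∧ E.D a₁ b₁ ∧ E.D (E.add a₁ b₁) c := by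
  obtain ⟨s, c, hs, rfl, hsc⟩ := hz
  rw [hc.quotAdd_mk h] at hs
  obtain ⟨a₁, b₁, ha, hb, h₁, rfl⟩ := hc.exists_split _ _ _ h (Quotient.exact hs)
  exact ⟨a₁, b₁, c, Quotient.sound ha, Quotient.sound hb, rfl, h₁, hsc⟩

lemma quotAdd_assoc {x y z : Quotient hc.setoid} (hxy : hc.quotD x y)
    (hxyz : hc.quotD (hc.quotAdd x y) z) :
    hc.quotD y z ∧ hc.quotD x (hc.quotAdd y z) ∧
      hc.quotAdd (hc.quotAdd x y) z = hc.quotAdd x (hc.quotAdd y z) := by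
  obtain ⟨a, b, rfl, rfl, h⟩ := hxy
  obtain ⟨a₁, b₁, c, ha, hb, rfl, h₁, h₂⟩ := hc.exists_rep_of_quotD_quotAdd h hxyz
  rw [← ha, ← hb]
  have hbc := E.assoc_def₁ _ _ _ h₁ h₂
  have habc := E.assoc_def₂ _ _ _ h₁ h₂
  refine ⟨⟨b₁, c, rfl, rfl, hbc⟩, ?_, ?_⟩
  · rw [hc.quotAdd_mk hbc]
    exact ⟨a₁, _, rfl, rfl, habc⟩
  · rw [hc.quotAdd_mk h₁, hc.quotAdd_mk h₂, hc.quotAdd_mk hbc, hc.quotAdd_mk habc,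
      E.assoc _ _ _ h₁ h₂]

lemma eq_mk_orth_of_quotAdd_eq_one {a : α} {y : Quotient hc.setoid} (hD : hc.quotD ⟦a⟧ y)
    (h1 : hc.quotAdd ⟦a⟧ y = ⟦E.one⟧) : y = ⟦E.orth a⟧ := by
  obtain ⟨a₁, b₁, ha, rfl, h⟩ := hD
  rw [← ha, hc.quotAdd_mk h] at h1
  exact Quotient.sound (hc.equiv.trans (hc.rel_orth_of_add_rel_one h (Quotient.exact h1))
    (hc.orth_compat _ _ (Quotient.exact ha)))

noncomputable def quotient : EffectAlgebra (Quotient hc.setoid) where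
  D := hc.quotD
  add := hc.quotAdd
  zero := ⟦E.zero⟧
  one := ⟦E.one⟧
  comm_def := by
    rintro _ _ ⟨a, b, rfl, rfl, h⟩
    exact ⟨b, a, rfl, rfl, E.comm_def _ _ h⟩
  comm := by
    rintro _ _ ⟨a, b, rfl, rfl, h⟩
    rw [hc.quotAdd_mk h, hc.quotAdd_mk (E.comm_def _ _ h), E.comm _ _ h]
  assoc_def₁ _ _ _ hxy hxyz := (hc.quotAdd_assoc hxy hxyz).1
  assoc_def₂ _ _ _ hxy hxyz := (hc.quotAdd_assoc hxy hxyz).2.1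
  assoc _ _ _ hxy hxyz := (hc.quotAdd_assoc hxy hxyz).2.2
  orth_exists := by
    refine Quotient.ind fun a => ?_
    refine ⟨⟦E.orth a⟧, ⟨⟨a, _, rfl, rfl, E.D_orth a⟩, ?_⟩,
      fun _ hy => hc.eq_mk_orth_of_quotAdd_eq_one hy.1 hy.2⟩
    rw [hc.quotAdd_mk (E.D_orth a), E.add_orth]
  add_one := by
    rintro _ ⟨a, b, rfl, hb, h⟩
    exact Quotient.sound (hc.rel_zero_of_D_of_rel_one h (Quotient.exact hb))

end IsCongruence

end EffectAlgebra

/-- the quotient of an effect algebra by an effect algebra congruence is an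
effect algebra, and the quotient map is a full surjective morphism of effect algebras. -/
theorem stmt6 {α : Type*} (E : EffectAlgebra α) (r : α → α → Prop)
    (hr : Equivalence r)
    (hC2 : ∀ a₁ a₂ b₁ b₂ : α, r a₁ a₂ → r b₁ b₂ → E.D a₁ b₁ → E.D a₂ b₂ →
      r (E.add a₁ b₁) (E.add a₂ b₂))
    (hC5 : ∀ a b c : α, E.D b c → r a (E.add b c) →
      ∃ b₁ c₁ : α, r b₁ b ∧ r c₁ c ∧ E.D b₁ c₁ ∧ a = E.add b₁ c₁)
    (hC6 : ∀ a b : α, r a b → r (E.orth a) (E.orth b)) :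
    let mk : α → Quotient (Setoid.mk r hr) := Quotient.mk (Setoid.mk r hr)
    ∃ Q : EffectAlgebra (Quotient (Setoid.mk r hr)),
      -- Q carries the induced partial operation
      (∀ a b : α, Q.D (mk a) (mk b) ↔ ∃ a₁ b₁ : α, r a₁ a ∧ r b₁ b ∧ E.D a₁ b₁) ∧
      Q.one = mk E.one ∧ Q.zero = mk E.zero ∧
      -- the quotient map is a morphism of effect algebras
      (∀ a b : α, E.D a b → Q.D (mk a) (mk b) ∧ Q.add (mk a) (mk b) = mk (E.add a b)) ∧
      -- it is surjective
      Function.Surjective mk ∧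
      -- and it is full
      (∀ a b : α, Q.D (mk a) (mk b) →
        ∃ a₁ b₁ : α, mk a₁ = mk a ∧ mk b₁ = mk b ∧ E.D a₁ b₁) := by
  intro mk
  have hc : E.IsCongruence r := ⟨hr, hC2, hC5, hC6⟩
  exact ⟨hc.quotient, fun _ _ => hc.quotD_mk_iff, rfl, rfl,
    fun a b h => ⟨⟨a, b, rfl, rfl, h⟩, hc.quotAdd_mk h⟩, Quotient.mk_surjective,
    fun _ _ ⟨a₁, b₁, ha, hb, h⟩ => ⟨a₁, b₁, ha, hb, h⟩⟩
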